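/- arXiv:2205.05024 — 4 statements merged into one kernel-verified Lean document; each statement's English description precedes it below -/
import Mathlib

section
/- Let j, l be natural numbers with j + l ≥ 1, and let (f_a)_{a∈ℤ\{0}}, (g_b)_{b∈ℤ\{0}} be complex sequences with Σ_a |a|^{2(j+l)}|f_a|² < ∞ and Σ_b |b|^{2(j+l)}|g_b|² < ∞. Define F_m = Σ_{a+b=m, a,b≠0} |m|^l |f_a| |g_b| for m ∈ ℤ\{0}. Then there is a constant c > 0 depending only on j and l such that (Σ_{m≠0} |m|^{2j} F_m²)^{1/2} ≤ c · (Σ_a |a|^{2(j+l)}|f_a|²)^{1/2} · (Σ_b |b|^{2(j+l)}|g_b|²)^{1/2}. -/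
open ENNReal MeasureTheory

/-- Cauchy–Schwarz for `ℝ≥0∞`-valued tsums over `ℤ`. -/
private lemma wce_cs (x y : ℤ → ℝ≥0∞) :
    (∑' a, x a * y a) ^ 2 ≤ (∑' a, x a ^ 2) * (∑' a, y a ^ 2) := by
  have hconj : Real.HolderConjugate 2 2 := ⟨by norm_num, by norm_num, by norm_num⟩
  have h := ENNReal.lintegral_mul_le_Lp_mul_Lq (Measure.count (α := ℤ)) hconj
      (measurable_of_countable x).aemeasurable (measurable_of_countable y).aemeasurable
  simp only [Pi.mul_apply, lintegral_count] at h
  have h2 : ∀ z : ℤ → ℝ≥0∞, ∑' a, z a ^ (2 : ℝ) = ∑' a, z a ^ 2 := by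
    intro z; congr 1; funext a
    rw [show (2 : ℝ) = ((2 : ℕ) : ℝ) by norm_num, ENNReal.rpow_natCast]
  rw [h2 x, h2 y] at h
  calc (∑' a, x a * y a) ^ 2
      ≤ ((∑' a, x a ^ 2) ^ (1 / 2 : ℝ) * (∑' a, y a ^ 2) ^ (1 / 2 : ℝ)) ^ 2 :=
        pow_le_pow_left₀ zero_le h 2
    _ = (∑' a, x a ^ 2) * (∑' a, y a ^ 2) := by
        rw [mul_pow, ← ENNReal.rpow_natCast (_ ^ (1 / 2 : ℝ)) 2,
          ← ENNReal.rpow_natCast (_ ^ (1 / 2 : ℝ)) 2, ← ENNReal.rpow_mul, ← ENNReal.rpow_mul]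
        norm_num

private lemma wce_pow_add (x y : ℝ≥0∞) (n : ℕ) : (x + y) ^ n ≤ 2 ^ n * (x ^ n + y ^ n) := by
  calc (x + y) ^ n ≤ (2 * max x y) ^ n := by
        apply pow_le_pow_left₀ zero_le
        rw [two_mul]
        exact add_le_add (le_max_left x y) (le_max_right x y)
    _ = 2 ^ n * max x y ^ n := mul_pow _ _ _
    _ ≤ 2 ^ n * (x ^ n + y ^ n) := by
        gcongr
        rcases max_cases x y with ⟨h, _⟩ | ⟨h, _⟩ <;> rw [h]
        · exact le_add_of_nonneg_right zero_le
        · exact le_add_of_nonneg_left zero_le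

/-- Young-type inequality: `‖u ⋆ p‖₂² ≤ ‖u‖₂² ‖p‖₁²` in `ℝ≥0∞`. -/
private lemma wce_young (u p : ℤ → ℝ≥0∞) :
    ∑' m : ℤ, (∑' a : ℤ, u a * p (m - a)) ^ 2 ≤ (∑' a, u a ^ 2) * (∑' b, p b) ^ 2 := by
  have hre : ∀ m : ℤ, ∑' a : ℤ, p (m - a) = ∑' b, p b := by
    intro m
    exact ((Equiv.subLeft m).tsum_eq p)
  have key : ∀ m : ℤ, (∑' a : ℤ, u a * p (m - a)) ^ 2 ≤
      (∑' a : ℤ, u a ^ 2 * p (m - a)) * (∑' b, p b) := by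
    intro m
    have hcs := wce_cs (fun a => u a * p (m - a) ^ (1 / 2 : ℝ)) (fun a => p (m - a) ^ (1 / 2 : ℝ))
    have hhalf : ∀ z : ℝ≥0∞, (z ^ (1 / 2 : ℝ)) ^ 2 = z := by
      intro z
      rw [← ENNReal.rpow_natCast (_ ^ (1 / 2 : ℝ)) 2, ← ENNReal.rpow_mul]
      norm_num
    calc (∑' a : ℤ, u a * p (m - a)) ^ 2
        = (∑' a : ℤ, (u a * p (m - a) ^ (1 / 2 : ℝ)) * p (m - a) ^ (1 / 2 : ℝ)) ^ 2 := by
          congr 1; apply tsum_congr; intro a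
          rw [mul_assoc, ← sq, hhalf]
      _ ≤ (∑' a : ℤ, (u a * p (m - a) ^ (1 / 2 : ℝ)) ^ 2) * (∑' a : ℤ, (p (m - a) ^ (1 / 2 : ℝ)) ^ 2) :=
          hcs
      _ = (∑' a : ℤ, u a ^ 2 * p (m - a)) * (∑' b, p b) := by
          rw [← hre m]
          congr 1 <;> apply tsum_congr <;> intro a
          · rw [mul_pow, hhalf]
          · rw [hhalf]
  calc ∑' m : ℤ, (∑' a : ℤ, u a * p (m - a)) ^ 2
      ≤ ∑' m : ℤ, (∑' a : ℤ, u a ^ 2 * p (m - a)) * (∑' b, p b) :=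
        ENNReal.tsum_le_tsum key
    _ = (∑' m : ℤ, ∑' a : ℤ, u a ^ 2 * p (m - a)) * (∑' b, p b) := ENNReal.tsum_mul_right
    _ = (∑' a : ℤ, ∑' m : ℤ, u a ^ 2 * p (m - a)) * (∑' b, p b) := by rw [ENNReal.tsum_comm]
    _ = (∑' a, u a ^ 2) * (∑' b, p b) ^ 2 := by
        rw [sq (∑' b, p b), ← mul_assoc]
        congr 1
        rw [← ENNReal.tsum_mul_right]
        apply tsum_congr; intro a
        rw [ENNReal.tsum_mul_left]
        congr 1
        exact (Equiv.subRight a).tsum_eq p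

private noncomputable def wce_w (m : ℤ) : ℝ≥0∞ := (m.natAbs : ℝ≥0∞)

private lemma wce_w_ofReal (m : ℤ) : ENNReal.ofReal |(m : ℝ)| = wce_w m := by
  rw [wce_w, show |(m : ℝ)| = ((m.natAbs : ℕ) : ℝ) by rw [Nat.cast_natAbs, Int.cast_abs],
    ENNReal.ofReal_natCast]

private lemma wce_w_ne_top (m : ℤ) : wce_w m ≠ ∞ := by
  simp [wce_w]

private lemma wce_w_ne_zero {m : ℤ} (hm : m ≠ 0) : wce_w m ≠ 0 := by
  simp [wce_w, Int.natAbs_eq_zero, hm]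

private lemma wce_one_le_w {m : ℤ} (hm : m ≠ 0) : 1 ≤ wce_w m := by
  rw [wce_w]
  exact_mod_cast Nat.one_le_iff_ne_zero.2 (by simpa [Int.natAbs_eq_zero] using hm)

private lemma wce_split (s : ℕ) (m a : ℤ) :
    wce_w m ^ s ≤ 2 ^ s * (wce_w a ^ s + wce_w (m - a) ^ s) := by
  have h1 : wce_w m ≤ wce_w a + wce_w (m - a) := by
    have := Int.natAbs_add_le a (m - a)
    rw [add_sub_cancel] at this
    simp only [wce_w]
    exact_mod_cast this
  calc wce_w m ^ s ≤ (wce_w a + wce_w (m - a)) ^ s := pow_le_pow_left₀ zero_le h1 s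
    _ ≤ 2 ^ s * (wce_w a ^ s + wce_w (m - a) ^ s) := wce_pow_add _ _ s

private noncomputable def wce_K (s : ℕ) : ℝ≥0∞ :=
  ∑' b : ℤ, (if b = 0 then 0 else (wce_w b ^ s)⁻¹) ^ 2

private lemma wce_K_ne_top {s : ℕ} (hs : 1 ≤ s) : wce_K s ≠ ∞ := by
  have hle : ∀ b : ℤ, (if b = 0 then 0 else (wce_w b ^ s)⁻¹) ^ 2 ≤
      ENNReal.ofReal (1 / (b : ℝ) ^ 2) := by
    intro b
    by_cases hb : b = 0
    · simp [hb]
    · rw [if_neg hb]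
      have h1 : ENNReal.ofReal (1 / (b : ℝ) ^ 2) = (wce_w b ^ 2)⁻¹ := by
        have hpos : (0 : ℝ) < (b : ℝ) ^ 2 := by
          have : (b : ℝ) ≠ 0 := Int.cast_ne_zero.2 hb
          positivity
        rw [one_div, ENNReal.ofReal_inv_of_pos hpos]
        congr 1
        rw [← sq_abs, ENNReal.ofReal_pow (abs_nonneg _), wce_w_ofReal]
      rw [h1, ← ENNReal.inv_pow, ← pow_mul, ENNReal.inv_le_inv]
      exact pow_le_pow_right₀ (wce_one_le_w hb) (by omega)
  have hlt : wce_K s ≤ ENNReal.ofReal (∑' b : ℤ, 1 / (b : ℝ) ^ 2) := by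
    calc wce_K s ≤ ∑' b : ℤ, ENNReal.ofReal (1 / (b : ℝ) ^ 2) := ENNReal.tsum_le_tsum hle
      _ = ENNReal.ofReal (∑' b : ℤ, 1 / (b : ℝ) ^ 2) := by
          rw [ENNReal.ofReal_tsum_of_nonneg (fun b => by positivity)
            (Real.summable_one_div_int_pow.2 one_lt_two)]
  exact ne_top_of_le_ne_top ENNReal.ofReal_ne_top hlt

private lemma wce_l1_sq_le (s : ℕ) (ψ : ℤ → ℝ≥0∞) (h0 : ψ 0 = 0) :
    (∑' b, ψ b) ^ 2 ≤ wce_K s * ∑' b, (wce_w b ^ s * ψ b) ^ 2 := by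
  have hψ : ∀ b, ψ b = (if b = 0 then 0 else (wce_w b ^ s)⁻¹) * (wce_w b ^ s * ψ b) := by
    intro b
    by_cases hb : b = 0
    · simp [hb, h0]
    · rw [if_neg hb, ← mul_assoc,
        ENNReal.inv_mul_cancel (pow_ne_zero _ (wce_w_ne_zero hb))
          (ENNReal.pow_ne_top (wce_w_ne_top b)), one_mul]
  calc (∑' b, ψ b) ^ 2
      = (∑' b, (if b = 0 then 0 else (wce_w b ^ s)⁻¹) * (wce_w b ^ s * ψ b)) ^ 2 := by
        congr 1; exact tsum_congr hψ
    _ ≤ (∑' b, (if b = 0 then 0 else (wce_w b ^ s)⁻¹) ^ 2) *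
          ∑' b, (wce_w b ^ s * ψ b) ^ 2 := wce_cs _ _
    _ = wce_K s * ∑' b, (wce_w b ^ s * ψ b) ^ 2 := rfl

private lemma wce_ofReal_tsum_le (r : ℤ → ℝ) (hr : ∀ i, 0 ≤ r i) :
    ENNReal.ofReal (∑' i, r i) ≤ ∑' i, ENNReal.ofReal (r i) := by
  by_cases h : Summable r
  · rw [ENNReal.ofReal_tsum_of_nonneg hr h]
  · rw [tsum_eq_zero_of_not_summable h]; simp

private lemma wce_tsum_eq_toReal (r : ℤ → ℝ) (hr : ∀ i, 0 ≤ r i) :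
    ∑' i, r i = (∑' i, ENNReal.ofReal (r i)).toReal := by
  rw [ENNReal.tsum_toReal_eq (fun i => ENNReal.ofReal_ne_top)]
  exact tsum_congr fun i => (ENNReal.toReal_ofReal (hr i)).symm

/-- Discrete weighted convolution (Sobolev multiplication) estimate:
if `F_m = Σ_{a+b=m} |m|^l |f_a||g_b|` then `‖F‖_{H^j} ≤ c ‖f‖_{H^{j+l}} ‖g‖_{H^{j+l}}`. -/
theorem weighted_convolution_estimate (j l : ℕ) (hjl : 1 ≤ j + l) :
    ∃ c : ℝ, 0 < c ∧ ∀ (f g : ℤ → ℂ), f 0 = 0 → g 0 = 0 →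
      Summable (fun a : ℤ => |(a : ℝ)| ^ (2 * (j + l)) * ‖f a‖ ^ 2) →
      Summable (fun b : ℤ => |(b : ℝ)| ^ (2 * (j + l)) * ‖g b‖ ^ 2) →
      Real.sqrt (∑' m : ℤ, |(m : ℝ)| ^ (2 * j) *
          (∑' a : ℤ, |(m : ℝ)| ^ l * ‖f a‖ * ‖g (m - a)‖) ^ 2) ≤
        c * Real.sqrt (∑' a : ℤ, |(a : ℝ)| ^ (2 * (j + l)) * ‖f a‖ ^ 2) *
          Real.sqrt (∑' b : ℤ, |(b : ℝ)| ^ (2 * (j + l)) * ‖g b‖ ^ 2) := by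
  set s := j + l with hs
  set C : ℝ≥0∞ := 2 ^ (2 * s) * 8 * wce_K s with hC
  have hCtop : C ≠ ∞ :=
    ENNReal.mul_ne_top (ENNReal.mul_ne_top (ENNReal.pow_ne_top ENNReal.ofNat_ne_top)
      (by norm_num)) (wce_K_ne_top hjl)
  refine ⟨Real.sqrt C.toReal + 1, by positivity, ?_⟩
  intro f g hf0 hg0 hfs hgs
  set φ : ℤ → ℝ≥0∞ := fun a => ENNReal.ofReal ‖f a‖ with hφ
  set ψ : ℤ → ℝ≥0∞ := fun b => ENNReal.ofReal ‖g b‖ with hψ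
  set U : ℤ → ℝ≥0∞ := fun a => wce_w a ^ s * φ a with hU
  set V : ℤ → ℝ≥0∞ := fun b => wce_w b ^ s * ψ b with hV
  set AE : ℝ≥0∞ := ∑' a, U a ^ 2 with hAE
  set BE : ℝ≥0∞ := ∑' b, V b ^ 2 with hBE
  -- identification of AE, BE with the real sums
  have hUA : ∀ a, U a ^ 2 = ENNReal.ofReal (|(a : ℝ)| ^ (2 * s) * ‖f a‖ ^ 2) := by
    intro a
    rw [ENNReal.ofReal_mul (by positivity), ENNReal.ofReal_pow (abs_nonneg _), wce_w_ofReal,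
      ENNReal.ofReal_pow (norm_nonneg _), hU, mul_pow, ← pow_mul, mul_comm s 2]
  have hVB : ∀ b, V b ^ 2 = ENNReal.ofReal (|(b : ℝ)| ^ (2 * s) * ‖g b‖ ^ 2) := by
    intro b
    rw [ENNReal.ofReal_mul (by positivity), ENNReal.ofReal_pow (abs_nonneg _), wce_w_ofReal,
      ENNReal.ofReal_pow (norm_nonneg _), hV, mul_pow, ← pow_mul, mul_comm s 2]
  have hA : AE = ENNReal.ofReal (∑' a : ℤ, |(a : ℝ)| ^ (2 * s) * ‖f a‖ ^ 2) := by
    rw [ENNReal.ofReal_tsum_of_nonneg (fun a => by positivity) hfs]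
    exact tsum_congr hUA
  have hB : BE = ENNReal.ofReal (∑' b : ℤ, |(b : ℝ)| ^ (2 * s) * ‖g b‖ ^ 2) := by
    rw [ENNReal.ofReal_tsum_of_nonneg (fun b => by positivity) hgs]
    exact tsum_congr hVB
  have hAtop : AE ≠ ∞ := by rw [hA]; exact ENNReal.ofReal_ne_top
  have hBtop : BE ≠ ∞ := by rw [hB]; exact ENNReal.ofReal_ne_top
  have hAr : AE.toReal = ∑' a : ℤ, |(a : ℝ)| ^ (2 * s) * ‖f a‖ ^ 2 := by
    rw [hA, ENNReal.toReal_ofReal (tsum_nonneg fun a => by positivity)]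
  have hBr : BE.toReal = ∑' b : ℤ, |(b : ℝ)| ^ (2 * s) * ‖g b‖ ^ 2 := by
    rw [hB, ENNReal.toReal_ofReal (tsum_nonneg fun b => by positivity)]
  -- convolution pieces
  set G : ℤ → ℝ≥0∞ := fun m => ∑' a, φ a * ψ (m - a) with hG
  set P : ℤ → ℝ≥0∞ := fun m => ∑' a, U a * ψ (m - a) with hP
  set Q : ℤ → ℝ≥0∞ := fun m => ∑' b, V b * φ (m - b) with hQ
  -- step 1: domination of each real term
  have step1 : ∀ m : ℤ, ENNReal.ofReal (|(m : ℝ)| ^ (2 * j) *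
      (∑' a : ℤ, |(m : ℝ)| ^ l * ‖f a‖ * ‖g (m - a)‖) ^ 2) ≤ (wce_w m ^ s * G m) ^ 2 := by
    intro m
    have hinner : ENNReal.ofReal (∑' a : ℤ, |(m : ℝ)| ^ l * ‖f a‖ * ‖g (m - a)‖) ≤
        wce_w m ^ l * G m := by
      refine le_trans (wce_ofReal_tsum_le _ (fun a => by positivity)) ?_
      rw [hG, ← ENNReal.tsum_mul_left]
      refine le_of_eq (tsum_congr fun a => ?_)
      rw [ENNReal.ofReal_mul (by positivity), ENNReal.ofReal_mul (by positivity),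
        ENNReal.ofReal_pow (abs_nonneg _), wce_w_ofReal, mul_assoc]
    calc ENNReal.ofReal (|(m : ℝ)| ^ (2 * j) *
          (∑' a : ℤ, |(m : ℝ)| ^ l * ‖f a‖ * ‖g (m - a)‖) ^ 2)
        = wce_w m ^ (2 * j) *
            ENNReal.ofReal (∑' a : ℤ, |(m : ℝ)| ^ l * ‖f a‖ * ‖g (m - a)‖) ^ 2 := by
          rw [ENNReal.ofReal_mul (by positivity), ENNReal.ofReal_pow (abs_nonneg _),
            wce_w_ofReal, ENNReal.ofReal_pow (tsum_nonneg fun a => by positivity)]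
      _ ≤ wce_w m ^ (2 * j) * (wce_w m ^ l * G m) ^ 2 := by gcongr
      _ = (wce_w m ^ s * G m) ^ 2 := by
          rw [mul_pow, mul_pow, ← pow_mul, ← pow_mul, ← mul_assoc, ← pow_add]
          congr 2
          omega
  -- step 2: splitting the weight
  have step2 : ∀ m : ℤ, wce_w m ^ s * G m ≤ 2 ^ s * (P m + Q m) := by
    intro m
    have hQalt : ∑' a, φ a * V (m - a) = Q m := by
      have h := (Equiv.subLeft m).tsum_eq (fun b => V b * φ (m - b))
      calc ∑' a, φ a * V (m - a)
          = ∑' a : ℤ, V ((Equiv.subLeft m) a) * φ (m - (Equiv.subLeft m) a) := by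
            refine tsum_congr fun a => ?_
            simp only [Equiv.subLeft_apply,
              show ∀ x : ℤ, m - (m - x) = x from fun x => by ring]
            exact mul_comm (φ a) (V (m - a))
        _ = ∑' b, V b * φ (m - b) := h
        _ = Q m := rfl
    calc wce_w m ^ s * G m = ∑' a, wce_w m ^ s * (φ a * ψ (m - a)) := by
          rw [hG, ENNReal.tsum_mul_left]
      _ ≤ ∑' a, 2 ^ s * (wce_w a ^ s + wce_w (m - a) ^ s) * (φ a * ψ (m - a)) :=
          ENNReal.tsum_le_tsum fun a => mul_le_mul_left (wce_split s m a) _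
      _ = ∑' a, 2 ^ s * (U a * ψ (m - a) + φ a * V (m - a)) := by
          refine tsum_congr fun a => ?_
          rw [hU, hV]; ring
      _ = 2 ^ s * (P m + ∑' a, φ a * V (m - a)) := by
          rw [ENNReal.tsum_mul_left, ENNReal.tsum_add, hP]
      _ = 2 ^ s * (P m + Q m) := by rw [hQalt]
  -- step 3/4: summing up
  have hPsum : ∑' m, P m ^ 2 ≤ AE * (wce_K s * BE) := by
    calc ∑' m, P m ^ 2 ≤ (∑' a, U a ^ 2) * (∑' b, ψ b) ^ 2 := wce_young U ψ
      _ ≤ AE * (wce_K s * BE) := by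
          rw [← hAE]
          gcongr
          have := wce_l1_sq_le s ψ (by rw [hψ]; simp [hg0])
          rw [hBE, hV]
          exact this
  have hQsum : ∑' m, Q m ^ 2 ≤ BE * (wce_K s * AE) := by
    calc ∑' m, Q m ^ 2 ≤ (∑' b, V b ^ 2) * (∑' a, φ a) ^ 2 := wce_young V φ
      _ ≤ BE * (wce_K s * AE) := by
          rw [← hBE]
          gcongr
          have := wce_l1_sq_le s φ (by rw [hφ]; simp [hf0])
          rw [hAE, hU]
          exact this
  have core : (∑' m : ℤ, ENNReal.ofReal (|(m : ℝ)| ^ (2 * j) *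
      (∑' a : ℤ, |(m : ℝ)| ^ l * ‖f a‖ * ‖g (m - a)‖) ^ 2)) ≤ C * AE * BE := by
    calc (∑' m : ℤ, ENNReal.ofReal (|(m : ℝ)| ^ (2 * j) *
        (∑' a : ℤ, |(m : ℝ)| ^ l * ‖f a‖ * ‖g (m - a)‖) ^ 2))
        ≤ ∑' m, (wce_w m ^ s * G m) ^ 2 := ENNReal.tsum_le_tsum step1
      _ ≤ ∑' m, 2 ^ (2 * s) * 4 * (P m ^ 2 + Q m ^ 2) := by
          refine ENNReal.tsum_le_tsum fun m => ?_
          calc (wce_w m ^ s * G m) ^ 2 ≤ (2 ^ s * (P m + Q m)) ^ 2 :=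
                pow_le_pow_left₀ zero_le (step2 m) 2
            _ = 2 ^ (2 * s) * (P m + Q m) ^ 2 := by rw [mul_pow, ← pow_mul, mul_comm s 2]
            _ ≤ 2 ^ (2 * s) * (2 ^ 2 * (P m ^ 2 + Q m ^ 2)) :=
                mul_le_mul_right (wce_pow_add (P m) (Q m) 2) _
            _ = 2 ^ (2 * s) * 4 * (P m ^ 2 + Q m ^ 2) := by ring_nf
      _ = 2 ^ (2 * s) * 4 * ((∑' m, P m ^ 2) + ∑' m, Q m ^ 2) := by
          rw [ENNReal.tsum_mul_left, ENNReal.tsum_add]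
      _ ≤ 2 ^ (2 * s) * 4 * (AE * (wce_K s * BE) + BE * (wce_K s * AE)) := by
          gcongr
      _ = C * AE * BE := by rw [hC]; ring
  -- back to the reals
  have hreal : (∑' m : ℤ, |(m : ℝ)| ^ (2 * j) *
      (∑' a : ℤ, |(m : ℝ)| ^ l * ‖f a‖ * ‖g (m - a)‖) ^ 2) ≤ C.toReal * AE.toReal * BE.toReal := by
    rw [wce_tsum_eq_toReal _ (fun m => by positivity), ← ENNReal.toReal_mul, ← ENNReal.toReal_mul]
    exact ENNReal.toReal_mono
      (ENNReal.mul_ne_top (ENNReal.mul_ne_top hCtop hAtop) hBtop) core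
  calc Real.sqrt (∑' m : ℤ, |(m : ℝ)| ^ (2 * j) *
        (∑' a : ℤ, |(m : ℝ)| ^ l * ‖f a‖ * ‖g (m - a)‖) ^ 2)
      ≤ Real.sqrt (C.toReal * AE.toReal * BE.toReal) := Real.sqrt_le_sqrt hreal
    _ = Real.sqrt C.toReal * Real.sqrt AE.toReal * Real.sqrt BE.toReal := by
        rw [Real.sqrt_mul (by positivity), Real.sqrt_mul ENNReal.toReal_nonneg]
    _ ≤ (Real.sqrt C.toReal + 1) * Real.sqrt AE.toReal * Real.sqrt BE.toReal := by
        have h1 : Real.sqrt C.toReal ≤ Real.sqrt C.toReal + 1 := by linarith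
        exact mul_le_mul_of_nonneg_right
          (mul_le_mul_of_nonneg_right h1 (Real.sqrt_nonneg _)) (Real.sqrt_nonneg _)
    _ = (Real.sqrt C.toReal + 1) *
          Real.sqrt (∑' a : ℤ, |(a : ℝ)| ^ (2 * s) * ‖f a‖ ^ 2) *
          Real.sqrt (∑' b : ℤ, |(b : ℝ)| ^ (2 * s) * ‖g b‖ ^ 2) := by rw [hAr, hBr]
end

section
/- Let (v_m)_{m∈ℤ} be a complex sequence indexed by nonzero integers with Σ_{m≠0} |m|²|v_m|² < ∞, let t ≥ 0, and define G_m(t, v) = Σ_{a+b=m} (i m / 2) e^{-i t·3mab} v_a v_b. Suppose that for all such sequences v, Σ_{m≠0} v_m · G_{-m}(t, v) = 0 (conservation of momentum by the continuous flow). Then for any two sequences v, w and any τ > 0, setting Δ_m = ∫₀^τ G_m(t+s, (v+w)/2) ds, the identity w_m = v_m + Δ_m for all m implies Σ_{m≠0} w_m w_{-m} = Σ_{m≠0} v_m v_{-m}. -/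
/-- The twisted KdV nonlinearity in Fourier variables:
`G_m(t,v) = Σ_{a+b=m} (i m / 2) e^{-i t 3 m a b} v_a v_b`. -/
noncomputable def kdvG (t : ℝ) (v : ℤ → ℂ) (m : ℤ) : ℂ :=
  ∑' a : ℤ, Complex.I * (m : ℂ) / 2 *
    Complex.exp (-(Complex.I) * (t : ℂ) * (3 * (m : ℂ) * (a : ℂ) * ((m - a : ℤ) : ℂ))) *
    v a * v (m - a)

open Complex MeasureTheory

variable {u : ℤ → ℂ}

lemma aux_inv_sq_summable : Summable (fun m : ℤ => 1 / (m : ℝ) ^ 2) :=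
  Real.summable_one_div_int_pow.mpr one_lt_two

lemma aux_sq_summable (hu : Summable (fun m : ℤ => |(m : ℝ)| ^ 2 * ‖u m‖ ^ 2))
    (hu0 : u 0 = 0) : Summable (fun m : ℤ => ‖u m‖ ^ 2) := by
  refine hu.of_nonneg_of_le (fun m => by positivity) (fun m => ?_)
  rcases eq_or_ne m 0 with rfl | hm
  · simp [hu0]
  · have : (1:ℝ) ≤ |(m:ℝ)| ^ 2 := by
      have : (1:ℝ) ≤ |(m:ℝ)| := by
        rw [← Int.cast_abs]; exact_mod_cast Int.one_le_abs hm
      nlinarith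
    nlinarith [sq_nonneg ‖u m‖]

lemma aux_l1_summable (hu : Summable (fun m : ℤ => |(m : ℝ)| ^ 2 * ‖u m‖ ^ 2))
    (hu0 : u 0 = 0) : Summable (fun m : ℤ => ‖u m‖) := by
  have h := (aux_inv_sq_summable.add hu)
  refine h.of_nonneg_of_le (fun m => norm_nonneg _) (fun m => ?_)
  rcases eq_or_ne m 0 with rfl | hm
  · simp [hu0]
  · have hm1 : (1:ℝ) ≤ |(m:ℝ)| := by
      rw [← Int.cast_abs]; exact_mod_cast Int.one_le_abs hm
    have hmpos : (0:ℝ) < |(m:ℝ)| := by linarith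
    have key : ‖u m‖ ≤ (1 / |(m:ℝ)|) * (|(m:ℝ)| * ‖u m‖) := by
      rw [one_div, ← mul_assoc, inv_mul_cancel₀ (ne_of_gt hmpos), one_mul]
    have amgm : (1 / |(m:ℝ)|) * (|(m:ℝ)| * ‖u m‖) ≤
        ((1 / |(m:ℝ)|) ^ 2 + (|(m:ℝ)| * ‖u m‖) ^ 2) / 2 := by
      nlinarith [sq_nonneg (1 / |(m:ℝ)| - |(m:ℝ)| * ‖u m‖)]
    have : (1 / |(m:ℝ)|) ^ 2 = 1 / (m:ℝ) ^ 2 := by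
      rw [div_pow, one_pow, _root_.sq_abs]
    calc ‖u m‖ ≤ ((1 / |(m:ℝ)|) ^ 2 + (|(m:ℝ)| * ‖u m‖) ^ 2) / 2 := le_trans key amgm
      _ ≤ 1 / (m:ℝ) ^ 2 + |(m:ℝ)| ^ 2 * ‖u m‖ ^ 2 := by
          rw [this, mul_pow]
          have hA : (0:ℝ) ≤ 1 / (m:ℝ) ^ 2 := by positivity
          have hB : (0:ℝ) ≤ |(m:ℝ)| ^ 2 * ‖u m‖ ^ 2 := by positivity
          linarith

lemma aux_term_norm (s : ℝ) (m a : ℤ) (u : ℤ → ℂ) :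
    ‖Complex.I * (m : ℂ) / 2 *
      Complex.exp (-(Complex.I) * (s : ℂ) * (3 * (m : ℂ) * (a : ℂ) * ((m - a : ℤ) : ℂ))) *
      u a * u (m - a)‖ = |(m:ℝ)| / 2 * (‖u a‖ * ‖u (m - a)‖) := by
  have hexp : -(Complex.I) * (s : ℂ) * (3 * (m : ℂ) * (a : ℂ) * ((m - a : ℤ) : ℂ)) =
      ((-(s * (3 * (m:ℝ) * (a:ℝ) * ((m:ℝ) - (a:ℝ)))) : ℝ) : ℂ) * Complex.I := by
    push_cast; ring
  rw [hexp]
  simp only [norm_mul, Complex.norm_exp_ofReal_mul_I]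
  rw [norm_div, norm_mul, Complex.norm_I, one_mul, Complex.norm_intCast, Complex.norm_two]
  ring

lemma aux_shift_sq_summable (hsq : Summable (fun m : ℤ => ‖u m‖ ^ 2)) (m : ℤ) :
    Summable (fun a : ℤ => ‖u (m - a)‖ ^ 2) :=
  hsq.comp_injective sub_right_injective

lemma aux_shift_wsq_summable (hu : Summable (fun m : ℤ => |(m : ℝ)| ^ 2 * ‖u m‖ ^ 2)) (m : ℤ) :
    Summable (fun a : ℤ => |((m - a : ℤ) : ℝ)| ^ 2 * ‖u (m - a)‖ ^ 2) :=
  hu.comp_injective sub_right_injective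

lemma aux_conv_summable (hsq : Summable (fun m : ℤ => ‖u m‖ ^ 2)) (m : ℤ) :
    Summable (fun a : ℤ => ‖u a‖ * ‖u (m - a)‖) := by
  refine ((hsq.add (aux_shift_sq_summable hsq m)).div_const 2).of_nonneg_of_le
    (fun a => by positivity) (fun a => ?_)
  have := sq_nonneg (‖u a‖ - ‖u (m - a)‖)
  show ‖u a‖ * ‖u (m - a)‖ ≤ (‖u a‖ ^ 2 + ‖u (m - a)‖ ^ 2) / 2
  nlinarith

/-- The per-term weighted bound. -/
lemma aux_weighted_bound (m a : ℤ) (u : ℤ → ℂ) :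
    |(m:ℝ)| / 2 * (‖u a‖ * ‖u (m - a)‖) ≤
      (|(a:ℝ)| ^ 2 * ‖u a‖ ^ 2 + ‖u (m - a)‖ ^ 2
        + (‖u a‖ ^ 2 + |((m - a : ℤ) : ℝ)| ^ 2 * ‖u (m - a)‖ ^ 2)) / 4 := by
  have habs : |(m:ℝ)| ≤ |(a:ℝ)| + |((m - a : ℤ) : ℝ)| := by
    have : (m:ℝ) = (a:ℝ) + ((m - a : ℤ) : ℝ) := by push_cast; ring
    rw [this]; exact abs_add_le _ _
  set x := ‖u a‖; set y := ‖u (m - a)‖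
  have hx : 0 ≤ x := norm_nonneg _
  have hy : 0 ≤ y := norm_nonneg _
  have h1 : |(a:ℝ)| * (x * y) ≤ (|(a:ℝ)| ^ 2 * x ^ 2 + y ^ 2) / 2 := by
    nlinarith [sq_nonneg (|(a:ℝ)| * x - y)]
  have h2 : |((m - a : ℤ) : ℝ)| * (x * y) ≤ (x ^ 2 + |((m - a : ℤ) : ℝ)| ^ 2 * y ^ 2) / 2 := by
    nlinarith [sq_nonneg (x - |((m - a : ℤ) : ℝ)| * y)]
  have hxy : 0 ≤ x * y := mul_nonneg hx hy
  nlinarith [mul_le_mul_of_nonneg_right habs hxy]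

lemma aux_G_bound (hu : Summable (fun m : ℤ => |(m : ℝ)| ^ 2 * ‖u m‖ ^ 2)) (hu0 : u 0 = 0)
    (s : ℝ) (m : ℤ) :
    ‖kdvG s u m‖ ≤ (∑' a : ℤ, |(a:ℝ)| ^ 2 * ‖u a‖ ^ 2) + ∑' a : ℤ, ‖u a‖ ^ 2 := by
  have hsq := aux_sq_summable hu hu0
  have hconv := aux_conv_summable hsq m
  have hnorm : Summable (fun a : ℤ => |(m:ℝ)| / 2 * (‖u a‖ * ‖u (m - a)‖)) :=
    hconv.mul_left _
  have h1 : ‖kdvG s u m‖ ≤ ∑' a : ℤ, |(m:ℝ)| / 2 * (‖u a‖ * ‖u (m - a)‖) := by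
    rw [kdvG]
    exact le_trans (norm_tsum_le_tsum_norm
        (hnorm.congr fun a => (aux_term_norm s m a u).symm))
      (le_of_eq (tsum_congr fun a => aux_term_norm s m a u))
  refine h1.trans ?_
  have hRHSsum : Summable (fun a : ℤ =>
      (|(a:ℝ)| ^ 2 * ‖u a‖ ^ 2 + ‖u (m - a)‖ ^ 2
        + (‖u a‖ ^ 2 + |((m - a : ℤ) : ℝ)| ^ 2 * ‖u (m - a)‖ ^ 2)) / 4) :=
    (((hu.add (aux_shift_sq_summable hsq m)).add
      (hsq.add (aux_shift_wsq_summable hu m))).div_const 4)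
  refine le_trans (Summable.tsum_le_tsum (fun a => aux_weighted_bound m a u) hnorm hRHSsum) ?_
  have e1 : ∑' a : ℤ, ‖u (m - a)‖ ^ 2 = ∑' a : ℤ, ‖u a‖ ^ 2 :=
    (Equiv.subLeft m).tsum_eq (fun a => ‖u a‖ ^ 2)
  have e2 : ∑' a : ℤ, |((m - a : ℤ) : ℝ)| ^ 2 * ‖u (m - a)‖ ^ 2
      = ∑' a : ℤ, |(a:ℝ)| ^ 2 * ‖u a‖ ^ 2 :=
    (Equiv.subLeft m).tsum_eq (fun a => |(a:ℝ)| ^ 2 * ‖u a‖ ^ 2)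
  rw [tsum_div_const]
  rw [Summable.tsum_add (hu.add (aux_shift_sq_summable hsq m)) (hsq.add (aux_shift_wsq_summable hu m)),
    Summable.tsum_add hu (aux_shift_sq_summable hsq m), Summable.tsum_add hsq (aux_shift_wsq_summable hu m), e1, e2]
  have hA : (0:ℝ) ≤ ∑' a : ℤ, |(a:ℝ)| ^ 2 * ‖u a‖ ^ 2 := tsum_nonneg (fun a => by positivity)
  have hU : (0:ℝ) ≤ ∑' a : ℤ, ‖u a‖ ^ 2 := tsum_nonneg (fun a => by positivity)
  linarith

lemma aux_term_summable (hu : Summable (fun m : ℤ => |(m : ℝ)| ^ 2 * ‖u m‖ ^ 2))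
    (hu0 : u 0 = 0) (s : ℝ) (m : ℤ) :
    Summable (fun a : ℤ => Complex.I * (m : ℂ) / 2 *
      Complex.exp (-(Complex.I) * (s : ℂ) * (3 * (m : ℂ) * (a : ℂ) * ((m - a : ℤ) : ℂ))) *
      u a * u (m - a)) := by
  refine Summable.of_norm ?_
  exact ((aux_conv_summable (aux_sq_summable hu hu0) m).mul_left (|(m:ℝ)| / 2)).congr
    (fun a => (aux_term_norm s m a u).symm)

lemma aux_G_continuous (hu : Summable (fun m : ℤ => |(m : ℝ)| ^ 2 * ‖u m‖ ^ 2))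
    (hu0 : u 0 = 0) (t : ℝ) (m : ℤ) :
    Continuous (fun s : ℝ => kdvG (t + s) u m) := by
  have hsq := aux_sq_summable hu hu0
  refine continuous_tsum (f := fun (a : ℤ) (s : ℝ) => Complex.I * (m : ℂ) / 2 *
      Complex.exp (-(Complex.I) * ((t + s : ℝ) : ℂ) * (3 * (m : ℂ) * (a : ℂ) * ((m - a : ℤ) : ℂ))) *
      u a * u (m - a)) ?_ ((aux_conv_summable hsq m).mul_left (|(m:ℝ)| / 2)) ?_
  · intro a
    refine (Continuous.mul (Continuous.mul continuous_const ?_) continuous_const).mul continuous_const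
    exact Complex.continuous_exp.comp (by fun_prop)
  · intro a s
    exact le_of_eq (aux_term_norm (t + s) m a u)

lemma aux_prod_summable {x y : ℤ → ℂ} (hx : Summable (fun m : ℤ => ‖x m‖ ^ 2))
    (hy : Summable (fun m : ℤ => ‖y m‖ ^ 2)) :
    Summable (fun m : ℤ => x m * y (-m)) := by
  have hyn : Summable (fun m : ℤ => ‖y (-m)‖ ^ 2) := hy.comp_injective neg_injective
  refine Summable.of_norm (((hx.add hyn).div_const 2).of_nonneg_of_le
    (fun m => norm_nonneg _) (fun m => ?_))
  rw [norm_mul]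
  have := sq_nonneg (‖x m‖ - ‖y (-m)‖)
  show ‖x m‖ * ‖y (-m)‖ ≤ (‖x m‖ ^ 2 + ‖y (-m)‖ ^ 2) / 2
  nlinarith

lemma aux_tsum_neg (f : ℤ → ℂ) : ∑' m : ℤ, f (-m) = ∑' m : ℤ, f m := by
  rw [← (Equiv.neg ℤ).tsum_eq f]
  rfl

/-- Exact momentum conservation of the implicit resonance-based midpoint scheme. -/
theorem midpoint_conserves_momentum (t τ : ℝ) (hτ : 0 < τ) (v w : ℤ → ℂ)
    (hv0 : v 0 = 0) (hw0 : w 0 = 0)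
    (hv : Summable (fun m : ℤ => |(m : ℝ)| ^ 2 * ‖v m‖ ^ 2))
    (hw : Summable (fun m : ℤ => |(m : ℝ)| ^ 2 * ‖w m‖ ^ 2))
    (hcons : ∀ (s : ℝ) (u : ℤ → ℂ), u 0 = 0 →
      Summable (fun m : ℤ => |(m : ℝ)| ^ 2 * ‖u m‖ ^ 2) →
      ∑' m : ℤ, u m * kdvG s u (-m) = 0)
    (hstep : ∀ m : ℤ,
      w m = v m + ∫ s in (0 : ℝ)..τ, kdvG (t + s) (fun a => (v a + w a) / 2) m) :
    ∑' m : ℤ, w m * w (-m) = ∑' m : ℤ, v m * v (-m) := by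
  set u : ℤ → ℂ := fun a => (v a + w a) / 2 with hu_def
  have hu0 : u 0 = 0 := by simp [hu_def, hv0, hw0]
  have hus : Summable (fun m : ℤ => |(m : ℝ)| ^ 2 * ‖u m‖ ^ 2) := by
    refine ((hv.add hw).div_const 2).of_nonneg_of_le (fun m => by positivity) (fun m => ?_)
    show |(m : ℝ)| ^ 2 * ‖u m‖ ^ 2 ≤ (|(m : ℝ)| ^ 2 * ‖v m‖ ^ 2 + |(m : ℝ)| ^ 2 * ‖w m‖ ^ 2) / 2
    have h1 : ‖u m‖ ≤ (‖v m‖ + ‖w m‖) / 2 := by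
      simp only [hu_def]
      calc ‖(v m + w m) / 2‖ = ‖v m + w m‖ / 2 := by
            rw [norm_div]; norm_num
        _ ≤ (‖v m‖ + ‖w m‖) / 2 := by
            have := norm_add_le (v m) (w m); linarith
    have h2 : ‖u m‖ ^ 2 ≤ (‖v m‖ ^ 2 + ‖w m‖ ^ 2) / 2 := by
      nlinarith [norm_nonneg (u m), norm_nonneg (v m), norm_nonneg (w m),
        sq_nonneg (‖v m‖ - ‖w m‖)]
    nlinarith [sq_nonneg |(m:ℝ)|, abs_nonneg ((m:ℝ))]
  have hvsq := aux_sq_summable hv hv0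
  have hwsq := aux_sq_summable hw hw0
  have husq := aux_sq_summable hus hu0
  have hu1 := aux_l1_summable hus hu0
  -- the increment
  set Δ : ℤ → ℂ := fun m => w m - v m with hΔ_def
  have hΔsq : Summable (fun m : ℤ => ‖Δ m‖ ^ 2) := by
    refine (((hwsq.add hvsq)).mul_left 2).of_nonneg_of_le (fun m => by positivity) (fun m => ?_)
    show ‖Δ m‖ ^ 2 ≤ 2 * (‖w m‖ ^ 2 + ‖v m‖ ^ 2)
    have h1 : ‖Δ m‖ ≤ ‖w m‖ + ‖v m‖ := norm_sub_le _ _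
    nlinarith [norm_nonneg (Δ m), norm_nonneg (w m), norm_nonneg (v m),
      sq_nonneg (‖w m‖ - ‖v m‖)]
  have hWW := aux_prod_summable hwsq hwsq
  have hVV := aux_prod_summable hvsq hvsq
  have hDV := aux_prod_summable hΔsq hvsq
  have hVD := aux_prod_summable hvsq hΔsq
  have hDD := aux_prod_summable hΔsq hΔsq
  -- Step 1: difference of momenta as a single sum
  have step1 : (∑' m : ℤ, w m * w (-m)) - (∑' m : ℤ, v m * v (-m))
      = ∑' m : ℤ, (Δ m * v (-m) + (v m * Δ (-m) + Δ m * Δ (-m))) := by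
    rw [← Summable.tsum_sub hWW hVV]
    exact tsum_congr fun m => by simp only [hΔ_def]; ring
  -- Step 2: split and symmetrize
  have step2 : ∑' m : ℤ, (Δ m * v (-m) + (v m * Δ (-m) + Δ m * Δ (-m)))
      = 2 * ∑' m : ℤ, u (-m) * Δ m := by
    have hsym : ∑' m : ℤ, v m * Δ (-m) = ∑' m : ℤ, Δ m * v (-m) := by
      rw [← aux_tsum_neg (fun m => v m * Δ (-m))]
      exact tsum_congr fun m => by rw [neg_neg, mul_comm]
    have hpt : ∀ m : ℤ, (2:ℂ) * (u (-m) * Δ m)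
        = Δ m * v (-m) + (Δ m * v (-m) + Δ m * Δ (-m)) := by
      intro m; simp only [hu_def, hΔ_def]; ring
    rw [Summable.tsum_add hDV (hVD.add hDD), Summable.tsum_add hVD hDD, hsym, ← tsum_mul_left,
      tsum_congr hpt, Summable.tsum_add hDV (hDV.add hDD), Summable.tsum_add hDV hDD]
  -- Step 3: the key vanishing
  have hGcont : ∀ m : ℤ, Continuous (fun s : ℝ => kdvG (t + s) u m) :=
    fun m => aux_G_continuous hus hu0 t m
  set C : ℝ := (∑' a : ℤ, |(a:ℝ)| ^ 2 * ‖u a‖ ^ 2) + ∑' a : ℤ, ‖u a‖ ^ 2 with hC_def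
  have hC0 : 0 ≤ C := by
    have hA : (0:ℝ) ≤ ∑' a : ℤ, |(a:ℝ)| ^ 2 * ‖u a‖ ^ 2 := tsum_nonneg (fun a => by positivity)
    have hU : (0:ℝ) ≤ ∑' a : ℤ, ‖u a‖ ^ 2 := tsum_nonneg (fun a => by positivity)
    linarith
  have hGb : ∀ (s : ℝ) (m : ℤ), ‖kdvG (t + s) u m‖ ≤ C :=
    fun s m => aux_G_bound hus hu0 (t + s) m
  have step3 : ∑' m : ℤ, u (-m) * Δ m = 0 := by
    have hΔint : ∀ m : ℤ, Δ m = ∫ s in (0:ℝ)..τ, kdvG (t + s) u m := by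
      intro m
      simp only [hΔ_def]
      rw [hstep m]; ring
    have h1 : ∀ m : ℤ, u (-m) * Δ m
        = ∫ s in Set.Ioc (0:ℝ) τ, u (-m) * kdvG (t + s) u m := by
      intro m
      rw [hΔint m, ← intervalIntegral.integral_const_mul,
        intervalIntegral.integral_of_le hτ.le]
    have hmeas : ∀ m : ℤ, MeasureTheory.AEStronglyMeasurable
        (fun s : ℝ => u (-m) * kdvG (t + s) u m)
        (MeasureTheory.volume.restrict (Set.Ioc (0:ℝ) τ)) :=
      fun m => (continuous_const.mul (hGcont m)).aestronglyMeasurable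
    have hbnd : ∑' m : ℤ, ∫⁻ s in Set.Ioc (0:ℝ) τ,
        ‖u (-m) * kdvG (t + s) u m‖₊ ≠ ⊤ := by
      have hle : ∀ m : ℤ, (∫⁻ s in Set.Ioc (0:ℝ) τ, ‖u (-m) * kdvG (t + s) u m‖₊)
          ≤ ENNReal.ofReal (‖u (-m)‖ * C * τ) := by
        intro m
        have : (∫⁻ s in Set.Ioc (0:ℝ) τ, ‖u (-m) * kdvG (t + s) u m‖₊)
            ≤ ∫⁻ _ in Set.Ioc (0:ℝ) τ, ENNReal.ofReal (‖u (-m)‖ * C) := by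
          refine MeasureTheory.lintegral_mono (fun s => ?_)
          rw [← ENNReal.ofReal_coe_nnreal, coe_nnnorm]
          refine ENNReal.ofReal_le_ofReal ?_
          rw [norm_mul]
          exact mul_le_mul_of_nonneg_left (hGb s m) (norm_nonneg _)
        refine this.trans ?_
        rw [MeasureTheory.lintegral_const, MeasureTheory.Measure.restrict_apply .univ]
        simp only [Set.univ_inter, Real.volume_Ioc, sub_zero]
        rw [← ENNReal.ofReal_mul (by positivity)]
      have hsum : Summable (fun m : ℤ => ‖u (-m)‖ * C * τ) :=
        ((hu1.comp_injective neg_injective).mul_right C).mul_right τ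
      refine ne_top_of_le_ne_top ?_ (ENNReal.tsum_le_tsum hle)
      rw [← ENNReal.ofReal_tsum_of_nonneg (fun m => by positivity) hsum]
      exact ENNReal.ofReal_ne_top
    have h2 : ∑' m : ℤ, ∫ s in Set.Ioc (0:ℝ) τ, u (-m) * kdvG (t + s) u m
        = ∫ s in Set.Ioc (0:ℝ) τ, ∑' m : ℤ, u (-m) * kdvG (t + s) u m :=
      (MeasureTheory.integral_tsum hmeas hbnd).symm
    have h3 : ∀ s : ℝ, ∑' m : ℤ, u (-m) * kdvG (t + s) u m = 0 := by
      intro s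
      have := hcons (t + s) u hu0 hus
      rw [← this, ← aux_tsum_neg (fun m => u m * kdvG (t + s) u (-m))]
      exact tsum_congr fun m => by rw [neg_neg]
    calc ∑' m : ℤ, u (-m) * Δ m
        = ∑' m : ℤ, ∫ s in Set.Ioc (0:ℝ) τ, u (-m) * kdvG (t + s) u m :=
          tsum_congr h1
      _ = ∫ s in Set.Ioc (0:ℝ) τ, ∑' m : ℤ, u (-m) * kdvG (t + s) u m := h2
      _ = 0 := by simp [h3]
  have hfin : (∑' m : ℤ, w m * w (-m)) - (∑' m : ℤ, v m * v (-m)) = 0 := by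
    rw [step1, step2, step3]; ring
  exact sub_eq_zero.mp hfin
end

section
/- Let G be as in the previous context, and suppose that for all pairs of sequences v, z and all t ≥ 0, Σ_{m∈ℤ} sgn(m)·(v_{-m}·G_m(t, z) + z_{-m}·G_m(t, v)) = 0 (infinitesimal conservation of the symplectic form by the continuous flow). Then for any sequences v, z, v', z' satisfying the implicit midpoint relations v'_m = v_m + ∫₀^τ G_m(t_k+s, (v+v')/2) ds and z'_m = z_m + ∫₀^τ G_m(t_k+s, (z+z')/2) ds, one has ω(v', z') = ω(v, z), where ω(y, ỹ) = Σ_{m∈ℤ} sgn(m)·y_m·ỹ_{-m}. -/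
open Complex MeasureTheory

/-- The symplectic form of KdV in Fourier variables: `ω(y,ỹ) = Σ_m sgn(m) y_m ỹ_{-m}`. -/
noncomputable def symplForm (y z : ℤ → ℂ) : ℂ :=
  ∑' m : ℤ, ((Int.sign m : ℤ) : ℂ) * y m * z (-m)


/-- ℓ¹ bound from weighted ℓ² bound. -/
lemma kdv_summable_norm {y : ℤ → ℂ} (hy0 : y 0 = 0)
    (hy : Summable (fun m : ℤ => |(m : ℝ)| ^ 2 * ‖y m‖ ^ 2)) :
    Summable (fun m : ℤ => ‖y m‖) := by
  have hs : Summable (fun m : ℤ => ((1 / (m : ℝ)) ^ 2 + |(m : ℝ)| ^ 2 * ‖y m‖ ^ 2) / 2) := by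
    refine Summable.div_const (Summable.add ?_ hy) 2
    have := (Real.summable_one_div_int_pow (p := 2)).2 (by norm_num)
    simpa [one_div, inv_pow] using this
  refine Summable.of_nonneg_of_le (fun m => norm_nonneg _) (fun m => ?_) hs
  rcases eq_or_ne m 0 with rfl | hm
  · simp only [hy0, norm_zero]
    positivity
  · have hm' : (1 : ℝ) ≤ |(m : ℝ)| := by
      rw [← Int.cast_abs]
      exact_mod_cast Int.one_le_abs (by exact_mod_cast hm)
    have h0 : (0:ℝ) < |(m : ℝ)| := lt_of_lt_of_le one_pos hm'
    have key := two_mul_le_add_sq (1 / |(m : ℝ)|) (|(m : ℝ)| * ‖y m‖)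
    have hprod : 2 * (1 / |(m : ℝ)|) * (|(m : ℝ)| * ‖y m‖) = 2 * ‖y m‖ := by
      field_simp
    rw [hprod] at key
    have h2 : (1 / |(m : ℝ)|) ^ 2 = (1 / (m : ℝ)) ^ 2 := by
      rw [div_pow, div_pow, _root_.sq_abs]
    nlinarith [key]

lemma kdv_norm_le_tsum {y : ℤ → ℂ} (hy : Summable (fun m : ℤ => ‖y m‖)) (m : ℤ) :
    ‖y m‖ ≤ ∑' a : ℤ, ‖y a‖ :=
  Summable.le_tsum hy m (fun _ _ => norm_nonneg _)

/-- Summability of the convolution. -/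
lemma kdv_summable_conv {Y : ℤ → ℂ} (hY : Summable fun m : ℤ => ‖Y m‖) :
    (∀ m : ℤ, Summable fun a : ℤ => ‖Y a‖ * ‖Y (m - a)‖) ∧
      Summable (fun m : ℤ => ∑' a : ℤ, ‖Y a‖ * ‖Y (m - a)‖) := by
  have hp : Summable (fun p : ℤ × ℤ => ‖Y p.1‖ * ‖Y p.2‖) :=
    hY.mul_of_nonneg hY (fun _ => norm_nonneg _) (fun _ => norm_nonneg _)
  let e : ℤ × ℤ ≃ ℤ × ℤ :=
    { toFun := fun p => (p.2, p.1 - p.2)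
      invFun := fun p => (p.1 + p.2, p.1)
      left_inv := fun p => by simp
      right_inv := fun p => by simp }
  have hp2 : Summable (fun p : ℤ × ℤ => ‖Y p.2‖ * ‖Y (p.1 - p.2)‖) := by
    have := (e.summable_iff (f := fun p : ℤ × ℤ => ‖Y p.1‖ * ‖Y p.2‖)).2 hp
    simpa [e, Function.comp_def] using this
  have := (summable_prod_of_nonneg
      (f := fun p : ℤ × ℤ => ‖Y p.2‖ * ‖Y (p.1 - p.2)‖)
      (fun p => mul_nonneg (norm_nonneg _) (norm_nonneg _))).1 hp2
  exact ⟨this.1, this.2⟩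

/-- Exact norm of each term of `kdvG`. -/
lemma kdv_norm_term (t : ℝ) (Y : ℤ → ℂ) (m a : ℤ) :
    ‖Complex.I * (m : ℂ) / 2 *
        Complex.exp (-(Complex.I) * (t : ℂ) * (3 * (m : ℂ) * (a : ℂ) * ((m - a : ℤ) : ℂ))) *
        Y a * Y (m - a)‖ = |(m : ℝ)| / 2 * (‖Y a‖ * ‖Y (m - a)‖) := by
  have hexp : -(Complex.I) * (t : ℂ) * (3 * (m : ℂ) * (a : ℂ) * ((m - a : ℤ) : ℂ)) =
      ((-(t * (3 * (m:ℝ) * (a:ℝ) * ((m:ℝ) - (a:ℝ)))) : ℝ) : ℂ) * Complex.I := by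
    push_cast; ring
  rw [norm_mul, norm_mul, norm_mul, hexp]
  rw [show ‖cexp (((-(t * (3 * (m:ℝ) * (a:ℝ) * ((m:ℝ) - (a:ℝ)))) : ℝ) : ℂ) * Complex.I)‖ = 1 from by
    rw [Complex.norm_exp_ofReal_mul_I]]
  rw [norm_div]
  have : ‖(m : ℂ)‖ = |(m : ℝ)| := by
    rw [← Complex.ofReal_intCast, Complex.norm_real, Real.norm_eq_abs]
  rw [norm_mul, Complex.norm_I, this]
  norm_num
  ring

/-- Norm bound for `kdvG`. -/
lemma kdv_norm_kdvG_le {Y : ℤ → ℂ} (hconv : ∀ m : ℤ, Summable fun a : ℤ => ‖Y a‖ * ‖Y (m - a)‖)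
    (t : ℝ) (m : ℤ) :
    ‖kdvG t Y m‖ ≤ |(m : ℝ)| / 2 * ∑' a : ℤ, ‖Y a‖ * ‖Y (m - a)‖ := by
  have hsum : Summable (fun a : ℤ => ‖Complex.I * (m : ℂ) / 2 *
      Complex.exp (-(Complex.I) * (t : ℂ) * (3 * (m : ℂ) * (a : ℂ) * ((m - a : ℤ) : ℂ))) *
      Y a * Y (m - a)‖) := by
    have := (hconv m).mul_left (|(m : ℝ)| / 2)
    refine this.congr fun a => ?_
    rw [kdv_norm_term]
  calc ‖kdvG t Y m‖ ≤ ∑' a : ℤ, ‖Complex.I * (m : ℂ) / 2 *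
        Complex.exp (-(Complex.I) * (t : ℂ) * (3 * (m : ℂ) * (a : ℂ) * ((m - a : ℤ) : ℂ))) *
        Y a * Y (m - a)‖ := norm_tsum_le_tsum_norm hsum
    _ = |(m : ℝ)| / 2 * ∑' a : ℤ, ‖Y a‖ * ‖Y (m - a)‖ := by
        rw [← tsum_mul_left]
        exact tsum_congr fun a => kdv_norm_term t Y m a

lemma kdv_smul (t : ℝ) (c : ℂ) (Y : ℤ → ℂ) (m : ℤ) :
    kdvG t (fun a => c * Y a) m = c ^ 2 * kdvG t Y m := by
  unfold kdvG
  rw [← tsum_mul_left]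
  exact tsum_congr fun a => by ring

/-- Gauge transformation identity. -/
lemma kdv_gauge (t : ℝ) (Y : ℤ → ℂ) (m : ℤ) :
    kdvG t Y m = Complex.exp (-(Complex.I) * (t : ℂ) * (m : ℂ) ^ 3) *
      kdvG 0 (fun a => Complex.exp (Complex.I * (t : ℂ) * (a : ℂ) ^ 3) * Y a) m := by
  unfold kdvG
  rw [← tsum_mul_left]
  refine tsum_congr fun a => ?_
  have h0 : -(Complex.I) * ((0:ℝ) : ℂ) * (3 * (m : ℂ) * (a : ℂ) * ((m - a : ℤ) : ℂ)) = 0 := by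
    push_cast; ring
  rw [h0, Complex.exp_zero]
  have he : Complex.exp (-(Complex.I) * (t : ℂ) * (3 * (m : ℂ) * (a : ℂ) * ((m - a : ℤ) : ℂ))) =
      Complex.exp (-(Complex.I) * (t : ℂ) * (m : ℂ) ^ 3) *
        (Complex.exp (Complex.I * (t : ℂ) * (a : ℂ) ^ 3) *
          Complex.exp (Complex.I * (t : ℂ) * (((m - a : ℤ)) : ℂ) ^ 3)) := by
    rw [← Complex.exp_add, ← Complex.exp_add]
    congr 1
    push_cast; ring
  rw [he]; ring

lemma kdv_norm_gauge (t : ℝ) (Y : ℤ → ℂ) (a : ℤ) :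
    ‖Complex.exp (Complex.I * (t : ℂ) * (a : ℂ) ^ 3) * Y a‖ = ‖Y a‖ := by
  rw [norm_mul, show Complex.I * (t : ℂ) * (a : ℂ) ^ 3 = ((t * (a:ℝ)^3 : ℝ) : ℂ) * Complex.I from by
    push_cast; ring, Complex.norm_exp_ofReal_mul_I, one_mul]

lemma kdv_continuous {Y : ℤ → ℂ} (hconv : ∀ m : ℤ, Summable fun a : ℤ => ‖Y a‖ * ‖Y (m - a)‖)
    (m : ℤ) : Continuous fun t : ℝ => kdvG t Y m := by
  unfold kdvG
  refine continuous_tsum (fun a => ?_) ((hconv m).mul_left (|(m : ℝ)| / 2))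
    (fun a t => le_of_eq (kdv_norm_term t Y m a))
  fun_prop

/-- The convolution is square-summable. -/
lemma kdv_summable_conv_sq {Y : ℤ → ℂ} (hY : Summable fun m : ℤ => ‖Y m‖) :
    Summable (fun m : ℤ => (∑' a : ℤ, ‖Y a‖ * ‖Y (m - a)‖) ^ 2) := by
  obtain ⟨h1, h2⟩ := kdv_summable_conv hY
  set c : ℤ → ℝ := fun m => ∑' a : ℤ, ‖Y a‖ * ‖Y (m - a)‖ with hc
  have hcnn : ∀ m, 0 ≤ c m := fun m =>
    tsum_nonneg fun a => mul_nonneg (norm_nonneg _) (norm_nonneg _)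
  set B : ℝ := ∑' a : ℤ, ‖Y a‖ with hB
  have hBnn : 0 ≤ B := tsum_nonneg fun a => norm_nonneg _
  have hbd : ∀ m, c m ≤ B * B := by
    intro m
    calc c m ≤ ∑' a : ℤ, ‖Y a‖ * B := by
          refine Summable.tsum_le_tsum (fun a => ?_) (h1 m) (hY.mul_right B)
          exact mul_le_mul_of_nonneg_left
            (Summable.le_tsum hY _ (fun _ _ => norm_nonneg _)) (norm_nonneg _)
      _ = B * B := by rw [tsum_mul_right]
  refine Summable.of_nonneg_of_le (fun m => sq_nonneg _) (fun m => ?_) (h2.mul_left (B * B))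
  calc (c m) ^ 2 = c m * c m := sq (c m) ▸ by ring
    _ ≤ (B * B) * c m := mul_le_mul_of_nonneg_right (hbd m) (hcnn m)

/-- Master domination: `m ↦ ‖Y (-m)‖ |m| (conv W)(m)` is summable. -/
lemma kdv_summable_dom {Y W : ℤ → ℂ}
    (hYw : Summable (fun m : ℤ => |(m : ℝ)| ^ 2 * ‖Y m‖ ^ 2))
    (hW : Summable fun m : ℤ => ‖W m‖) :
    Summable (fun m : ℤ => ‖Y (-m)‖ * (|(m : ℝ)| * ∑' a : ℤ, ‖W a‖ * ‖W (m - a)‖)) := by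
  have hYw' : Summable (fun m : ℤ => |(m : ℝ)| ^ 2 * ‖Y (-m)‖ ^ 2) := by
    have := (Equiv.neg ℤ).summable_iff
      (f := fun m : ℤ => |(m : ℝ)| ^ 2 * ‖Y m‖ ^ 2) |>.2 hYw
    simpa [Function.comp_def] using this
  have hsq := kdv_summable_conv_sq hW
  set c : ℤ → ℝ := fun m => ∑' a : ℤ, ‖W a‖ * ‖W (m - a)‖ with hc
  have hcnn : ∀ m, 0 ≤ c m := fun m =>
    tsum_nonneg fun a => mul_nonneg (norm_nonneg _) (norm_nonneg _)
  refine Summable.of_nonneg_of_le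
    (fun m => mul_nonneg (norm_nonneg _) (mul_nonneg (abs_nonneg _) (hcnn m)))
    (fun m => ?_) ((hYw'.add hsq).div_const 2)
  have key := two_mul_le_add_sq (|(m : ℝ)| * ‖Y (-m)‖) (c m)
  have h1 : (|(m : ℝ)| * ‖Y (-m)‖) ^ 2 = |(m : ℝ)| ^ 2 * ‖Y (-m)‖ ^ 2 := by ring
  nlinarith [key, hcnn m, norm_nonneg (Y (-m)), abs_nonneg ((m : ℝ))]

lemma kdv_norm_sign_le (m : ℤ) : ‖((Int.sign m : ℤ) : ℂ)‖ ≤ 1 := by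
  rcases lt_trichotomy m 0 with h | h | h
  · rw [Int.sign_eq_neg_one_of_neg h]; norm_num
  · subst h; simp
  · rw [Int.sign_eq_one_of_pos h]; norm_num

/-- Summability of the paired terms. -/
lemma kdv_summable_pair {Y W : ℤ → ℂ}
    (hY0 : Y 0 = 0) (hW0 : W 0 = 0)
    (hYw : Summable (fun m : ℤ => |(m : ℝ)| ^ 2 * ‖Y m‖ ^ 2))
    (hWw : Summable (fun m : ℤ => |(m : ℝ)| ^ 2 * ‖W m‖ ^ 2)) (t : ℝ) :
    Summable (fun m : ℤ => ((Int.sign m : ℤ) : ℂ) * Y (-m) * kdvG t W m) := by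
  have hW1 : Summable (fun m : ℤ => ‖W m‖) := kdv_summable_norm hW0 hWw
  have hconv := (kdv_summable_conv hW1).1
  refine Summable.of_norm (Summable.of_nonneg_of_le (fun m => norm_nonneg _) (fun m => ?_)
    (kdv_summable_dom hYw hW1))
  rw [norm_mul, norm_mul]
  calc ‖((Int.sign m : ℤ) : ℂ)‖ * ‖Y (-m)‖ * ‖kdvG t W m‖
      ≤ 1 * ‖Y (-m)‖ * (|(m : ℝ)| / 2 * ∑' a : ℤ, ‖W a‖ * ‖W (m - a)‖) := by
        refine mul_le_mul ?_ (kdv_norm_kdvG_le hconv t m) (norm_nonneg _) ?_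
        · exact mul_le_mul_of_nonneg_right (kdv_norm_sign_le m) (norm_nonneg _)
        · positivity
    _ ≤ ‖Y (-m)‖ * (|(m : ℝ)| * ∑' a : ℤ, ‖W a‖ * ‖W (m - a)‖) := by
        rw [one_mul]
        have hc : (0:ℝ) ≤ ∑' a : ℤ, ‖W a‖ * ‖W (m - a)‖ :=
          tsum_nonneg fun a => mul_nonneg (norm_nonneg _) (norm_nonneg _)
        have : |(m : ℝ)| / 2 * ∑' a : ℤ, ‖W a‖ * ‖W (m - a)‖
            ≤ |(m : ℝ)| * ∑' a : ℤ, ‖W a‖ * ‖W (m - a)‖ := by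
          apply mul_le_mul_of_nonneg_right _ hc
          linarith [abs_nonneg ((m:ℝ))]
        exact mul_le_mul_of_nonneg_left this (norm_nonneg _)

/-- The bilinear-type sum vanishes at every real time given the conservation hypothesis. -/
lemma kdv_T_vanish
    (hcons : ∀ (t : ℝ), 0 ≤ t → ∀ (y w : ℤ → ℂ), y 0 = 0 → w 0 = 0 →
      Summable (fun m : ℤ => |(m : ℝ)| ^ 2 * ‖y m‖ ^ 2) →
      Summable (fun m : ℤ => |(m : ℝ)| ^ 2 * ‖w m‖ ^ 2) →
      ∑' m : ℤ, ((Int.sign m : ℤ) : ℂ) *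
        (y (-m) * kdvG t w m + w (-m) * kdvG t y m) = 0)
    (t : ℝ) {Y W : ℤ → ℂ}
    (hY0 : Y 0 = 0) (hW0 : W 0 = 0)
    (hYw : Summable (fun m : ℤ => |(m : ℝ)| ^ 2 * ‖Y m‖ ^ 2))
    (hWw : Summable (fun m : ℤ => |(m : ℝ)| ^ 2 * ‖W m‖ ^ 2)) :
    ∑' m : ℤ, ((Int.sign m : ℤ) : ℂ) * Y (-m) * kdvG t W m = 0 := by
  -- gauge to time 0
  set SY : ℤ → ℂ := fun a => Complex.exp (Complex.I * (t : ℂ) * (a : ℂ) ^ 3) * Y a with hSY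
  set SW : ℤ → ℂ := fun a => Complex.exp (Complex.I * (t : ℂ) * (a : ℂ) ^ 3) * W a with hSW
  have hSY0 : SY 0 = 0 := by simp [hSY, hY0]
  have hSW0 : SW 0 = 0 := by simp [hSW, hW0]
  have hSYw : Summable (fun m : ℤ => |(m : ℝ)| ^ 2 * ‖SY m‖ ^ 2) := by
    refine hYw.congr fun m => ?_
    rw [hSY]; rw [kdv_norm_gauge]
  have hSWw : Summable (fun m : ℤ => |(m : ℝ)| ^ 2 * ‖SW m‖ ^ 2) := by
    refine hWw.congr fun m => ?_
    rw [hSW]; rw [kdv_norm_gauge]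
  -- rewrite the sum in gauged variables
  have hterm : ∀ m : ℤ, ((Int.sign m : ℤ) : ℂ) * Y (-m) * kdvG t W m
      = ((Int.sign m : ℤ) : ℂ) * SY (-m) * kdvG 0 SW m := by
    intro m
    rw [kdv_gauge t W m]
    have harg : Complex.I * (t : ℂ) * (((-m : ℤ)) : ℂ) ^ 3
        = -(Complex.I) * (t : ℂ) * (m : ℂ) ^ 3 := by push_cast; ring
    have : SY (-m) = Complex.exp (-(Complex.I) * (t : ℂ) * (m : ℂ) ^ 3) * Y (-m) := by
      show Complex.exp (Complex.I * (t : ℂ) * (((-m : ℤ)) : ℂ) ^ 3) * Y (-m) = _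
      rw [harg]
    rw [this]; ring
  rw [tsum_congr hterm]
  -- now at time 0; polarize
  have hS2W0 : (fun a => (2:ℂ) * SW a) 0 = 0 := by simp [hSW0]
  have hS2Ww : Summable (fun m : ℤ => |(m : ℝ)| ^ 2 * ‖(2:ℂ) * SW m‖ ^ 2) := by
    have := hSWw.mul_left 4
    refine this.congr fun m => ?_
    have h2 : ‖(2:ℂ) * SW m‖ = 2 * ‖SW m‖ := by
      rw [norm_mul]; norm_num
    rw [h2]; ring
  have h1 := hcons 0 le_rfl SY SW hSY0 hSW0 hSYw hSWw
  have h2 := hcons 0 le_rfl SY (fun a => (2:ℂ) * SW a) hSY0 hS2W0 hSYw hS2Ww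
  have SA : Summable (fun m : ℤ => ((Int.sign m : ℤ) : ℂ) * SY (-m) * kdvG 0 SW m) :=
    kdv_summable_pair hSY0 hSW0 hSYw hSWw 0
  have SB : Summable (fun m : ℤ => ((Int.sign m : ℤ) : ℂ) * SW (-m) * kdvG 0 SY m) :=
    kdv_summable_pair hSW0 hSY0 hSWw hSYw 0
  set A : ℂ := ∑' m : ℤ, ((Int.sign m : ℤ) : ℂ) * SY (-m) * kdvG 0 SW m with hA
  set B : ℂ := ∑' m : ℤ, ((Int.sign m : ℤ) : ℂ) * SW (-m) * kdvG 0 SY m with hB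
  have e1 : A + B = 0 := by
    rw [hA, hB, ← Summable.tsum_add SA SB, ← h1]
    exact tsum_congr fun m => by ring
  have e2 : 4 * A + 2 * B = 0 := by
    rw [hA, hB, ← tsum_mul_left, ← tsum_mul_left, ← Summable.tsum_add (SA.mul_left 4) (SB.mul_left 2),
      ← h2]
    refine tsum_congr fun m => ?_
    rw [kdv_smul 0 2 SW m]
    ring
  have : A = 0 := by linear_combination (e2 - 2 * e1) / 2
  exact this

lemma kdv_integrand_zero
    (hcons : ∀ (t : ℝ), 0 ≤ t → ∀ (y w : ℤ → ℂ), y 0 = 0 → w 0 = 0 →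
      Summable (fun m : ℤ => |(m : ℝ)| ^ 2 * ‖y m‖ ^ 2) →
      Summable (fun m : ℤ => |(m : ℝ)| ^ 2 * ‖w m‖ ^ 2) →
      ∑' m : ℤ, ((Int.sign m : ℤ) : ℂ) *
        (y (-m) * kdvG t w m + w (-m) * kdvG t y m) = 0)
    (t : ℝ) {V Z : ℤ → ℂ}
    (hV0 : V 0 = 0) (hZ0 : Z 0 = 0)
    (hVw : Summable (fun m : ℤ => |(m : ℝ)| ^ 2 * ‖V m‖ ^ 2))
    (hZw : Summable (fun m : ℤ => |(m : ℝ)| ^ 2 * ‖Z m‖ ^ 2)) :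
    ∑' m : ℤ, ((Int.sign m : ℤ) : ℂ) *
      (kdvG t V m * Z (-m) + V m * kdvG t Z (-m)) = 0 := by
  have Sf : Summable (fun m : ℤ => ((Int.sign m : ℤ) : ℂ) * Z (-m) * kdvG t V m) :=
    kdv_summable_pair hZ0 hV0 hZw hVw t
  have Sg' : Summable (fun m : ℤ => ((Int.sign m : ℤ) : ℂ) * V (-m) * kdvG t Z m) :=
    kdv_summable_pair hV0 hZ0 hVw hZw t
  set g : ℤ → ℂ := fun m => ((Int.sign m : ℤ) : ℂ) * V m * kdvG t Z (-m) with hg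
  have hgneg : ∀ m : ℤ, g (-m) = -(((Int.sign m : ℤ) : ℂ) * V (-m) * kdvG t Z m) := by
    intro m
    rw [hg]
    show ((Int.sign (-m) : ℤ) : ℂ) * V (-m) * kdvG t Z (-(-m)) = _
    rw [neg_neg, Int.sign_neg]
    push_cast
    ring
  have Sg : Summable g := by
    refine ((Equiv.neg ℤ).summable_iff (f := g)).1 ?_
    refine (Sg'.neg).congr fun m => ?_
    simp only [Function.comp, Equiv.neg_apply]
    rw [hgneg m]
  have hsplit : (∑' m : ℤ, ((Int.sign m : ℤ) : ℂ) *
      (kdvG t V m * Z (-m) + V m * kdvG t Z (-m)))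
      = (∑' m : ℤ, ((Int.sign m : ℤ) : ℂ) * Z (-m) * kdvG t V m) + ∑' m : ℤ, g m := by
    rw [← Summable.tsum_add Sf Sg]
    refine tsum_congr fun m => ?_
    rw [hg]; ring
  rw [hsplit, kdv_T_vanish hcons t hZ0 hV0 hZw hVw]
  have : ∑' m : ℤ, g m = ∑' m : ℤ, g (-m) :=
    (((Equiv.neg ℤ).tsum_eq g)).symm
  rw [this, tsum_congr hgneg, tsum_neg, kdv_T_vanish hcons t hV0 hZ0 hVw hZw]
  simp

/-- Midpoints inherit the weighted summability. -/
lemma kdv_mid_summable {y y' : ℤ → ℂ}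
    (hy : Summable (fun m : ℤ => |(m : ℝ)| ^ 2 * ‖y m‖ ^ 2))
    (hy' : Summable (fun m : ℤ => |(m : ℝ)| ^ 2 * ‖y' m‖ ^ 2)) :
    Summable (fun m : ℤ => |(m : ℝ)| ^ 2 * ‖(y m + y' m) / 2‖ ^ 2) := by
  refine Summable.of_nonneg_of_le (fun m => by positivity) (fun m => ?_)
    ((hy.add hy').div_const 2)
  have h1 : ‖(y m + y' m) / 2‖ ≤ (‖y m‖ + ‖y' m‖) / 2 := by
    rw [norm_div]
    have : ‖(2:ℂ)‖ = 2 := by norm_num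
    rw [this]
    linarith [norm_add_le (y m) (y' m)]
  have h2 : ‖(y m + y' m) / 2‖ ^ 2 ≤ (‖y m‖ ^ 2 + ‖y' m‖ ^ 2) / 2 := by
    nlinarith [sq_nonneg (‖y m‖ - ‖y' m‖), norm_nonneg ((y m + y' m) / 2),
      norm_nonneg (y m), norm_nonneg (y' m)]
  have h3 : (0:ℝ) ≤ |(m : ℝ)| ^ 2 := by positivity
  nlinarith [mul_le_mul_of_nonneg_left h2 h3]

/-- Summability of the symplectic-form summands. -/
lemma kdv_summable_sympl {y w : ℤ → ℂ}
    (hy1 : Summable fun m : ℤ => ‖y m‖) (hw1 : Summable fun m : ℤ => ‖w m‖) :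
    Summable (fun m : ℤ => ((Int.sign m : ℤ) : ℂ) * y m * w (-m)) := by
  set B : ℝ := ∑' a : ℤ, ‖w a‖ with hB
  refine Summable.of_norm (Summable.of_nonneg_of_le (fun m => norm_nonneg _)
    (fun m => ?_) (hy1.mul_right B))
  rw [norm_mul, norm_mul]
  have hwB : ‖w (-m)‖ ≤ B := Summable.le_tsum hw1 (-m) (fun _ _ => norm_nonneg _)
  calc ‖((Int.sign m : ℤ) : ℂ)‖ * ‖y m‖ * ‖w (-m)‖
      ≤ 1 * ‖y m‖ * B := by
        have h1 := kdv_norm_sign_le m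
        gcongr
    _ = ‖y m‖ * B := by ring

/-- Exact symplecticity of the implicit resonance-based midpoint rule. -/
theorem midpoint_preserves_symplectic_form (tk τ : ℝ) (hτ : 0 < τ)
    (v z v' z' : ℤ → ℂ)
    (hv0 : v 0 = 0) (hz0 : z 0 = 0) (hv'0 : v' 0 = 0) (hz'0 : z' 0 = 0)
    (hv : Summable (fun m : ℤ => |(m : ℝ)| ^ 2 * ‖v m‖ ^ 2))
    (hz : Summable (fun m : ℤ => |(m : ℝ)| ^ 2 * ‖z m‖ ^ 2))
    (hv' : Summable (fun m : ℤ => |(m : ℝ)| ^ 2 * ‖v' m‖ ^ 2))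
    (hz' : Summable (fun m : ℤ => |(m : ℝ)| ^ 2 * ‖z' m‖ ^ 2))
    (hcons : ∀ (t : ℝ), 0 ≤ t → ∀ (y w : ℤ → ℂ), y 0 = 0 → w 0 = 0 →
      Summable (fun m : ℤ => |(m : ℝ)| ^ 2 * ‖y m‖ ^ 2) →
      Summable (fun m : ℤ => |(m : ℝ)| ^ 2 * ‖w m‖ ^ 2) →
      ∑' m : ℤ, ((Int.sign m : ℤ) : ℂ) *
        (y (-m) * kdvG t w m + w (-m) * kdvG t y m) = 0)
    (hstepv : ∀ m : ℤ,
      v' m = v m + ∫ s in (0 : ℝ)..τ, kdvG (tk + s) (fun a => (v a + v' a) / 2) m)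
    (hstepz : ∀ m : ℤ,
      z' m = z m + ∫ s in (0 : ℝ)..τ, kdvG (tk + s) (fun a => (z a + z' a) / 2) m) :
    symplForm v' z' = symplForm v z := by
  set V : ℤ → ℂ := fun a => (v a + v' a) / 2 with hVdef
  set Z : ℤ → ℂ := fun a => (z a + z' a) / 2 with hZdef
  have hV0 : V 0 = 0 := by rw [hVdef]; simp [hv0, hv'0]
  have hZ0 : Z 0 = 0 := by rw [hZdef]; simp [hz0, hz'0]
  have hVw : Summable (fun m : ℤ => |(m : ℝ)| ^ 2 * ‖V m‖ ^ 2) := kdv_mid_summable hv hv'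
  have hZw : Summable (fun m : ℤ => |(m : ℝ)| ^ 2 * ‖Z m‖ ^ 2) := kdv_mid_summable hz hz'
  have hV1 : Summable (fun m : ℤ => ‖V m‖) := kdv_summable_norm hV0 hVw
  have hZ1 : Summable (fun m : ℤ => ‖Z m‖) := kdv_summable_norm hZ0 hZw
  have hconvV := (kdv_summable_conv hV1).1
  have hconvZ := (kdv_summable_conv hZ1).1
  have hv1 := kdv_summable_norm hv0 hv
  have hz1 := kdv_summable_norm hz0 hz
  have hv'1 := kdv_summable_norm hv'0 hv'
  have hz'1 := kdv_summable_norm hz'0 hz'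
  have S1 : Summable (fun m : ℤ => ((Int.sign m : ℤ) : ℂ) * v' m * z' (-m)) :=
    kdv_summable_sympl hv'1 hz'1
  have S2 : Summable (fun m : ℤ => ((Int.sign m : ℤ) : ℂ) * v m * z (-m)) :=
    kdv_summable_sympl hv1 hz1
  have hcV : ∀ m : ℤ, Continuous fun s : ℝ => kdvG (tk + s) V m := fun m =>
    (kdv_continuous hconvV m).comp (continuous_const.add continuous_id)
  have hcZ : ∀ m : ℤ, Continuous fun s : ℝ => kdvG (tk + s) Z m := fun m =>
    (kdv_continuous hconvZ m).comp (continuous_const.add continuous_id)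
  set f : ℤ → ℝ → ℂ := fun m s => ((Int.sign m : ℤ) : ℂ) *
    (kdvG (tk + s) V m * Z (-m) + V m * kdvG (tk + s) Z (-m)) with hfdef
  have hfc : ∀ m : ℤ, Continuous (f m) := by
    intro m
    rw [hfdef]
    exact continuous_const.mul (((hcV m).mul continuous_const).add
      (continuous_const.mul (hcZ (-m))))
  -- per-index identity
  have key : ∀ m : ℤ, ((Int.sign m : ℤ) : ℂ) * v' m * z' (-m)
      - ((Int.sign m : ℤ) : ℂ) * v m * z (-m) = ∫ s in (0:ℝ)..τ, f m s := by
    intro m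
    have hint : (∫ s in (0:ℝ)..τ, f m s)
        = ((Int.sign m : ℤ) : ℂ) * Z (-m) * (∫ s in (0:ℝ)..τ, kdvG (tk + s) V m)
          + ((Int.sign m : ℤ) : ℂ) * V m * (∫ s in (0:ℝ)..τ, kdvG (tk + s) Z (-m)) := by
      rw [show f m = fun s => (((Int.sign m : ℤ) : ℂ) * Z (-m)) * kdvG (tk + s) V m
          + (((Int.sign m : ℤ) : ℂ) * V m) * kdvG (tk + s) Z (-m) from
        funext fun s => by rw [hfdef]; ring]
      rw [intervalIntegral.integral_add
        (f := fun s => (((Int.sign m : ℤ) : ℂ) * Z (-m)) * kdvG (tk + s) V m)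
        (g := fun s => (((Int.sign m : ℤ) : ℂ) * V m) * kdvG (tk + s) Z (-m))
        ((continuous_const.mul (hcV m)).intervalIntegrable 0 τ)
        ((continuous_const.mul (hcZ (-m))).intervalIntegrable 0 τ),
        intervalIntegral.integral_const_mul, intervalIntegral.integral_const_mul]
    rw [hint]
    have hCA : V m = (v m + v' m) / 2 := rfl
    have hCB : Z (-m) = (z (-m) + z' (-m)) / 2 := rfl
    rw [hCA, hCB, hstepv m, hstepz (-m)]
    ring
  have hdiff : symplForm v' z' - symplForm v z = ∑' m : ℤ, ∫ s in (0:ℝ)..τ, f m s := by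
    rw [symplForm, symplForm, ← Summable.tsum_sub S1 S2]
    exact tsum_congr key
  -- the tsum of integrals vanishes
  have hmeas : ∀ m : ℤ, AEStronglyMeasurable (f m) (volume.restrict (Set.Ioc (0:ℝ) τ)) :=
    fun m => (hfc m).aestronglyMeasurable
  set D : ℤ → ℝ := fun m => ‖Z (-m)‖ * (|(m : ℝ)| * ∑' a : ℤ, ‖V a‖ * ‖V (m - a)‖)
    + ‖V m‖ * (|(m : ℝ)| * ∑' a : ℤ, ‖Z a‖ * ‖Z (-m - a)‖) with hD
  have hDnn : ∀ m, 0 ≤ D m := by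
    intro m
    rw [hD]
    have h1 : (0:ℝ) ≤ ∑' a : ℤ, ‖V a‖ * ‖V (m - a)‖ :=
      tsum_nonneg fun a => mul_nonneg (norm_nonneg _) (norm_nonneg _)
    have h2 : (0:ℝ) ≤ ∑' a : ℤ, ‖Z a‖ * ‖Z (-m - a)‖ :=
      tsum_nonneg fun a => mul_nonneg (norm_nonneg _) (norm_nonneg _)
    positivity
  have hDsum : Summable D := by
    rw [hD]
    refine Summable.add (kdv_summable_dom hZw hV1) ?_
    have hs := kdv_summable_dom hVw hZ1
    refine ((Equiv.neg ℤ).summable_iff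
      (f := fun m : ℤ => ‖V m‖ * (|(m : ℝ)| * ∑' a : ℤ, ‖Z a‖ * ‖Z (-m - a)‖))).1 ?_
    refine hs.congr fun m => ?_
    simp only [Function.comp, Equiv.neg_apply, neg_neg, Int.cast_neg, abs_neg]
  have hbound : ∀ (m : ℤ) (s : ℝ), ‖f m s‖ ≤ D m := by
    intro m s
    rw [hfdef, hD]
    have hc1 : (0:ℝ) ≤ ∑' a : ℤ, ‖V a‖ * ‖V (m - a)‖ :=
      tsum_nonneg fun a => mul_nonneg (norm_nonneg _) (norm_nonneg _)
    have hc2 : (0:ℝ) ≤ ∑' a : ℤ, ‖Z a‖ * ‖Z (-m - a)‖ :=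
      tsum_nonneg fun a => mul_nonneg (norm_nonneg _) (norm_nonneg _)
    have hk1 : ‖kdvG (tk + s) V m‖ ≤ |(m : ℝ)| * ∑' a : ℤ, ‖V a‖ * ‖V (m - a)‖ := by
      refine (kdv_norm_kdvG_le hconvV (tk + s) m).trans ?_
      apply mul_le_mul_of_nonneg_right _ hc1
      linarith [abs_nonneg ((m:ℝ))]
    have hk2 : ‖kdvG (tk + s) Z (-m)‖ ≤ |(m : ℝ)| * ∑' a : ℤ, ‖Z a‖ * ‖Z (-m - a)‖ := by
      refine (kdv_norm_kdvG_le hconvZ (tk + s) (-m)).trans ?_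
      have habs : |((-m : ℤ) : ℝ)| = |(m : ℝ)| := by push_cast; rw [abs_neg]
      rw [habs]
      apply mul_le_mul_of_nonneg_right _ hc2
      linarith [abs_nonneg ((m:ℝ))]
    calc ‖((Int.sign m : ℤ) : ℂ) *
          (kdvG (tk + s) V m * Z (-m) + V m * kdvG (tk + s) Z (-m))‖
        ≤ 1 * ‖kdvG (tk + s) V m * Z (-m) + V m * kdvG (tk + s) Z (-m)‖ := by
          rw [norm_mul]
          exact mul_le_mul_of_nonneg_right (kdv_norm_sign_le m) (norm_nonneg _)
      _ ≤ ‖kdvG (tk + s) V m‖ * ‖Z (-m)‖ + ‖V m‖ * ‖kdvG (tk + s) Z (-m)‖ := by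
          rw [one_mul]
          refine (norm_add_le _ _).trans ?_
          rw [norm_mul, norm_mul]
      _ ≤ (|(m : ℝ)| * ∑' a : ℤ, ‖V a‖ * ‖V (m - a)‖) * ‖Z (-m)‖
          + ‖V m‖ * (|(m : ℝ)| * ∑' a : ℤ, ‖Z a‖ * ‖Z (-m - a)‖) := by
          gcongr
      _ = ‖Z (-m)‖ * (|(m : ℝ)| * ∑' a : ℤ, ‖V a‖ * ‖V (m - a)‖)
          + ‖V m‖ * (|(m : ℝ)| * ∑' a : ℤ, ‖Z a‖ * ‖Z (-m - a)‖) := by ring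
  have hfin : (∑' m : ℤ, ∫⁻ s in Set.Ioc (0:ℝ) τ, ‖f m s‖₊) ≠ ⊤ := by
    have hle : ∀ m : ℤ, (∫⁻ s in Set.Ioc (0:ℝ) τ, ‖f m s‖₊)
        ≤ ENNReal.ofReal (D m) * ENNReal.ofReal τ := by
      intro m
      calc (∫⁻ s in Set.Ioc (0:ℝ) τ, ‖f m s‖₊)
          ≤ ∫⁻ _ in Set.Ioc (0:ℝ) τ, ENNReal.ofReal (D m) := by
            refine lintegral_mono fun s => ?_
            rw [← ENNReal.ofReal_coe_nnreal, coe_nnnorm]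
            exact ENNReal.ofReal_le_ofReal (hbound m s)
        _ = ENNReal.ofReal (D m) * ENNReal.ofReal τ := by
            rw [MeasureTheory.setLIntegral_const, Real.volume_Ioc, sub_zero]
    refine ne_of_lt (lt_of_le_of_lt (ENNReal.tsum_le_tsum hle) ?_)
    rw [ENNReal.tsum_mul_right, ← ENNReal.ofReal_tsum_of_nonneg hDnn hDsum]
    exact ENNReal.mul_lt_top ENNReal.ofReal_lt_top ENNReal.ofReal_lt_top
  have hiz : ∀ s : ℝ, ∑' m : ℤ, f m s = 0 := by
    intro s
    rw [hfdef]
    exact kdv_integrand_zero hcons (tk + s) hV0 hZ0 hVw hZw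
  have hzero : ∑' m : ℤ, ∫ s in (0:ℝ)..τ, f m s = 0 := by
    rw [tsum_congr fun m : ℤ =>
      (intervalIntegral.integral_of_le (μ := volume) (f := f m) hτ.le),
      ← MeasureTheory.integral_tsum hmeas hfin]
    simp only [hiz, integral_zero]
  rw [← sub_eq_zero, hdiff, hzero]
end

section
/- The map Φ_τ defined implicitly by u^{n+1} = e^{−τ∂_x³}u^n + (1/24)(∂_x^{−1}u^{n+1} + e^{−τ∂_x³}∂_x^{−1}u^n)² − (1/24)e^{−τ∂_x³}(e^{τ∂_x³}∂_x^{−1}u^{n+1} + ∂_x^{−1}u^n)² is symmetric: Φ_τ = Φ_{−τ}^{−1}, i.e. if u^{n+1} = Φ_τ(u^n) then u^n = Φ_{−τ}(u^{n+1}). -/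
theorem LinearMap.apply_apply_neg_of_comp_eq_add {R M G : Type*} [Semiring R] [AddCommMonoid M]
    [Module R M] [AddGroup G] {E : G → M →ₗ[R] M} (hE0 : E 0 = LinearMap.id)
    (hEadd : ∀ s t : G, (E s).comp (E t) = E (s + t)) (t : G) (x : M) :
    E t (E (-t) x) = x := by
  rw [← LinearMap.comp_apply, hEadd, add_neg_cancel, hE0, LinearMap.id_apply]

/-- Symmetry of the implicit resonance-based midpoint scheme: if
`u^{n+1} = Φ_τ(u^n)` then `u^n = Φ_{-τ}(u^{n+1})`. Here `E t` is the Airy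
propagator `e^{t∂ₓ³}` (a one-parameter group of linear maps on the algebra of
zero-mean functions) and `P` is the antiderivative `∂ₓ⁻¹`. -/
theorem resonance_midpoint_symmetric (A : Type*) [CommRing A] [Algebra ℂ A]
    (E : ℝ → A →ₗ[ℂ] A) (P : A →ₗ[ℂ] A)
    (hE0 : E 0 = LinearMap.id)
    (hEadd : ∀ σ τ : ℝ, (E σ).comp (E τ) = E (σ + τ))
    (τ : ℝ) (un un1 : A)
    (h : un1 = E (-τ) un
        + (1 / 24 : ℂ) • (P un1 + E (-τ) (P un)) ^ 2
        - (1 / 24 : ℂ) • (E (-τ) ((E τ (P un1) + P un) ^ 2))) :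
    un = E τ un1
        + (1 / 24 : ℂ) • (P un + E τ (P un1)) ^ 2
        - (1 / 24 : ℂ) • (E τ ((E (-τ) (P un) + P un1) ^ 2)) := by
  have hE := LinearMap.apply_apply_neg_of_comp_eq_add hE0 hEadd τ
  -- Applying `E τ` to `h` gives the claimed relation with the two squared terms exchanged.
  have hτ := congrArg (E τ) h
  rw [map_sub, map_add, map_smul, map_smul, hE, hE] at hτ
  rw [hτ, add_comm (P un), add_comm (E (-τ) (P un))]
  abel
end
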